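/- arXiv:2207.08678 — 2 statements merged into one kernel-verified Lean document; each statement's English description precedes it below -/
import Mathlib

section
/- If P is a closed walk in G of minimum total weight among all TSP tours (closed walks visiting all vertices), chosen among such tours to have the minimum number of hops, then for every ordered pair (u,v) of distinct vertices of the vertex cover C, the tour P contains at most one hop of the form (u, s, v) with s ∈ V \ C. -/
/-- The weight of a walk: the sum of the weights of its edges. -/
def walkWeight {V : Type*} {G : SimpleGraph V} (ω : Sym2 V → ℕ) {a b : V}
    (P : G.Walk a b) : ℕ :=
  (P.edges.map ω).sum

/-- The list of consecutive triples of a list. -/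
def triples {V : Type*} (l : List V) : List (V × V × V) :=
  l.zip (l.tail.zip l.tail.tail)

/-- The number of hops of a walk with respect to a vertex cover `C`: the number of
length-2 subwalks `(u, s, v)` with `s ∉ C` and `u ≠ v`. -/
def numHops {V : Type*} [DecidableEq V] (C : Set V) [DecidablePred (· ∈ C)]
    {G : SimpleGraph V} {a b : V} (P : G.Walk a b) : ℕ :=
  ((triples P.support).filter (fun t => t.2.1 ∉ C ∧ t.1 ≠ t.2.2)).length

/-!
Two hops `(u, s₁, v)` and `(u, s₂, v)` cut the tour into `A (u s₁ v) B (u s₂ v) D`. The walk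
`A (u x u) B⁻¹ (v y v) D`, with `{x, y} = {s₁, s₂}` paired so that the loops are the cheaper
choice, visits the same vertices and weighs no more. Since `u, v ∈ C`, hops never straddle them,
so the hop count splits into the hop counts of the pieces; reversing `B` keeps its hops, and the
two hops become two loops, which are not hops: the new tour is again optimal, with two hops fewer.
-/

section Triples

variable {α : Type*}

@[simp]
theorem triples_cons_cons_cons (a b c : α) (l : List α) :
    triples (a :: b :: c :: l) = (a, b, c) :: triples (b :: c :: l) := by
  simp [triples]

theorem length_triples (l : List α) : (triples l).length = l.length - 2 := by
  simp [triples]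
  omega

theorem triples_reverse (l : List α) :
    triples l.reverse = ((triples l).map fun t => (t.2.2, t.2.1, t.1)).reverse := by
  apply List.ext_getElem
  · simp [length_triples]
  · intro i _ _
    have hi : i < l.length - 2 := by rwa [length_triples, List.length_reverse] at *
    simp [triples, List.getElem_reverse]
    refine ⟨?_, ?_, ?_⟩ <;> congr 1 <;> omega

theorem mem_triples_cons_cons {t : α × α × α} {a b : α} {l : List α}
    (h : t ∈ triples (a :: b :: l)) : t.1 = a ∨ t.1 = b ∨ t ∈ triples l := by
  rcases l with _ | ⟨c, _ | ⟨d, l⟩⟩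
  · simp [triples] at h
  · simp_all [triples]
  · simp only [triples_cons_cons_cons, List.mem_cons] at h
    rcases h with rfl | rfl | h <;> simp_all

theorem exists_eq_append_of_triples_eq_append {l : List α} {T₁ T₂ : List (α × α × α)}
    {a b c : α} (h : triples l = T₁ ++ (a, b, c) :: T₂) :
    ∃ xs ys, l = xs ++ a :: b :: c :: ys ∧ T₂ = triples (b :: c :: ys) := by
  induction T₁ generalizing l with
  | nil =>
    match l, h with
    | a :: b :: c :: ys, h =>
      simp only [triples_cons_cons_cons, List.nil_append, List.cons.injEq, Prod.mk.injEq] at h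
      obtain ⟨⟨rfl, rfl, rfl⟩, rfl⟩ := h
      exact ⟨[], ys, rfl, rfl⟩
  | cons t₀ T₁ ih =>
    match l, h with
    | a :: b :: c :: l, h =>
      simp only [triples_cons_cons_cons, List.cons_append, List.cons.injEq] at h
      obtain ⟨xs, ys, hl, rfl⟩ := ih h.2
      exact ⟨a :: xs, ys, by rw [hl]; rfl, rfl⟩

theorem exists_eq_append_of_one_lt_length_filter_hops [DecidableEq α] {C : Set α}
    [DecidablePred (· ∈ C)] {u v : α} {l : List α} (hu : u ∈ C) (huv : u ≠ v)
    (h : 1 < ((triples l).filter fun t => t.1 = u ∧ t.2.2 = v ∧ t.2.1 ∉ C).length) :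
    ∃ l₀ s₁ m s₂ d, s₁ ∉ C ∧ s₂ ∉ C ∧ l = l₀ ++ u :: s₁ :: v :: (m ++ u :: s₂ :: v :: d) := by
  generalize hF : (triples l).filter _ = F at h
  match F, h with
  | (u₁, s₁, v₁) :: (u₂, s₂, v₂) :: T, _ =>
    obtain ⟨T₁, T₂, hl, -, ht, hT₂⟩ := List.filter_eq_cons_iff.mp hF
    obtain ⟨T₃, T₄, hT₂', -, ht', -⟩ := List.filter_eq_cons_iff.mp hT₂
    obtain ⟨l₀, r, rfl, rfl⟩ := exists_eq_append_of_triples_eq_append hl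
    simp only [decide_eq_true_eq] at ht ht'
    obtain ⟨h₁, h₂, hs₁⟩ := ht
    subst u₁ v₁
    obtain ⟨h₁, h₂, hs₂⟩ := ht'
    subst u₂ v₂
    have hmem : (u, s₂, v) ∈ triples r := by
      rcases mem_triples_cons_cons (by simp [hT₂'] : (u, s₂, v) ∈ triples (s₁ :: v :: r))
        with h | h | h
      · exact absurd (h ▸ hu) hs₁
      · exact absurd h huv
      · exact h
    obtain ⟨T₅, T₆, hr⟩ := List.append_of_mem hmem
    obtain ⟨m, d, rfl, -⟩ := exists_eq_append_of_triples_eq_append hr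
    exact ⟨l₀, s₁, m, s₂, d, hs₁, hs₂, rfl⟩

end Triples

section Hops

variable {α : Type*} [DecidableEq α] (C : Set α) [DecidablePred (· ∈ C)]

def hopCount (l : List α) : ℕ :=
  ((triples l).filter fun t => t.2.1 ∉ C ∧ t.1 ≠ t.2.2).length

theorem numHops_eq_hopCount {G : SimpleGraph α} {a b : α} (P : G.Walk a b) :
    numHops C P = hopCount C P.support :=
  rfl

@[simp]
theorem hopCount_singleton (a : α) : hopCount C [a] = 0 :=
  rfl

@[simp]
theorem hopCount_pair (a b : α) : hopCount C [a, b] = 0 :=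
  rfl

@[simp]
theorem hopCount_cons_cons_cons (a b c : α) (l : List α) :
    hopCount C (a :: b :: c :: l) =
      (if b ∉ C ∧ a ≠ c then 1 else 0) + hopCount C (b :: c :: l) := by
  rw [hopCount, triples_cons_cons_cons, List.filter_cons]
  split <;> simp_all [hopCount]
  omega

theorem hopCount_append_cons_of_mem {c : α} (hc : c ∈ C) :
    ∀ xs ys : List α, hopCount C (xs ++ c :: ys) = hopCount C (xs ++ [c]) + hopCount C (c :: ys)
  | [], _ => by simp
  | [_], [] => by simp
  | [_], _ :: _ => by simp [hc]
  | x :: x' :: xs, ys => by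
    have ih := hopCount_append_cons_of_mem hc (x' :: xs) ys
    rcases xs with _ | ⟨x'', xs⟩ <;>
      simp only [List.cons_append, List.nil_append, hopCount_cons_cons_cons] at ih ⊢ <;> omega

theorem hopCount_append_cons_cons_cons {a b c : α} (ha : a ∈ C) (hc : c ∈ C) (xs ys : List α) :
    hopCount C (xs ++ a :: b :: c :: ys) =
      hopCount C (xs ++ [a]) + (if b ∉ C ∧ a ≠ c then 1 else 0) + hopCount C (c :: ys) := by
  have hb := hopCount_append_cons_of_mem C hc [b] ys
  simp only [List.singleton_append, hopCount_pair, zero_add] at hb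
  rw [hopCount_append_cons_of_mem C ha, hopCount_cons_cons_cons, hb, add_assoc]

theorem hopCount_reverse (l : List α) : hopCount C l.reverse = hopCount C l := by
  rw [hopCount, triples_reverse, List.filter_reverse, List.length_reverse, List.filter_map,
    List.length_map, hopCount]
  congr 1
  apply List.filter_congr
  intro t _
  simp only [Function.comp_apply, ne_comm]

theorem hopCount_loops_add_two {u v s₁ s₂ : α} (x y : α) (hu : u ∈ C) (hv : v ∈ C)
    (huv : u ≠ v) (hs₁ : s₁ ∉ C) (hs₂ : s₂ ∉ C) (l₀ m d : List α) :
    hopCount C (l₀ ++ u :: x :: u :: (m.reverse ++ v :: y :: v :: d)) + 2 =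
      hopCount C (l₀ ++ u :: s₁ :: v :: (m ++ u :: s₂ :: v :: d)) := by
  have hm : hopCount C (u :: m.reverse ++ [v]) = hopCount C (v :: m ++ [u]) := by
    rw [← hopCount_reverse C (v :: m ++ [u])]
    simp
  rw [hopCount_append_cons_cons_cons C hu hu, hopCount_append_cons_cons_cons C hu hv,
    ← List.cons_append, ← List.cons_append, hopCount_append_cons_cons_cons C hv hv,
    hopCount_append_cons_cons_cons C hu hv, hm]
  simp [hs₁, hs₂, huv]
  omega

end Hops

namespace SimpleGraph.Walk

variable {V : Type*} {G : SimpleGraph V}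

theorem exists_eq_cons_of_support_eq_cons_cons {u b s : V} {ys : List V} (P : G.Walk u b)
    (h : P.support = u :: s :: ys) :
    ∃ (hs : G.Adj u s) (P' : G.Walk s b), P = cons hs P' ∧ P'.support = s :: ys := by
  cases P with
  | nil => simp at h
  | cons hs P' =>
    rw [support_cons, List.cons.injEq] at h
    obtain rfl : _ = s := List.head_eq_of_cons_eq (P'.cons_tail_support.trans h.2)
    exact ⟨hs, P', rfl, h.2⟩

theorem exists_eq_append_of_support_eq_append_cons {a b u : V} {xs ys : List V}
    (P : G.Walk a b) (h : P.support = xs ++ u :: ys) :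
    ∃ (P₁ : G.Walk a u) (P₂ : G.Walk u b),
      P = P₁.append P₂ ∧ P₁.support = xs ++ [u] ∧ P₂.support = u :: ys := by
  induction P generalizing xs with
  | nil =>
    rcases xs with _ | ⟨x, xs⟩
    · obtain ⟨rfl, rfl⟩ := List.cons_eq_cons.mp h
      exact ⟨nil, nil, rfl, rfl, rfl⟩
    · simp at h
  | cons hadj P ih =>
    rw [support_cons] at h
    rcases xs with _ | ⟨x, xs⟩
    · obtain ⟨rfl, hP⟩ := List.cons_eq_cons.mp h
      exact ⟨nil, cons hadj P, rfl, rfl, by rw [support_cons, hP]⟩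
    · obtain ⟨rfl, hP⟩ := List.cons_eq_cons.mp h
      obtain ⟨P₁, P₂, rfl, h₁, h₂⟩ := ih hP
      exact ⟨cons hadj P₁, P₂, rfl, by rw [support_cons, h₁]; rfl, h₂⟩

theorem exists_eq_append_cons_cons_of_support_eq {a b u s w : V} {xs ys : List V}
    (P : G.Walk a b) (h : P.support = xs ++ u :: s :: w :: ys) :
    ∃ (P₁ : G.Walk a u) (hus : G.Adj u s) (hsw : G.Adj s w) (P₂ : G.Walk w b),
      P = P₁.append (cons hus (cons hsw P₂)) ∧ P₁.support = xs ++ [u] ∧ P₂.support = w :: ys := by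
  obtain ⟨P₁, R, rfl, h₁, hR⟩ := exists_eq_append_of_support_eq_append_cons P h
  obtain ⟨hus, R', rfl, hR'⟩ := exists_eq_cons_of_support_eq_cons_cons R hR
  obtain ⟨hsw, P₂, rfl, h₂⟩ := exists_eq_cons_of_support_eq_cons_cons R' hR'
  exact ⟨P₁, hus, hsw, P₂, rfl, h₁, h₂⟩

end SimpleGraph.Walk

section Weight

open SimpleGraph

variable {V : Type*} {G : SimpleGraph V} (ω : Sym2 V → ℕ)

@[simp]
theorem walkWeight_cons {a b c : V} (h : G.Adj a b) (P : G.Walk b c) :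
    walkWeight ω (Walk.cons h P) = ω s(a, b) + walkWeight ω P := by
  simp [walkWeight]

@[simp]
theorem walkWeight_append {a b c : V} (P : G.Walk a b) (Q : G.Walk b c) :
    walkWeight ω (P.append Q) = walkWeight ω P + walkWeight ω Q := by
  simp [walkWeight]

@[simp]
theorem walkWeight_reverse {a b : V} (P : G.Walk a b) :
    walkWeight ω P.reverse = walkWeight ω P := by
  simp [walkWeight, List.sum_reverse]

end Weight

open SimpleGraph Walk in
theorem exists_walk_loops_of_support_eq_two_hops {V : Type*} {G : SimpleGraph V}
    (ω : Sym2 V → ℕ) {a b u v s₁ s₂ : V} {l₀ m d : List V} (P : G.Walk a b)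
    (hP : P.support = l₀ ++ u :: s₁ :: v :: (m ++ u :: s₂ :: v :: d)) :
    ∃ (Q : G.Walk a b) (x y : V), (x = s₁ ∧ y = s₂ ∨ x = s₂ ∧ y = s₁) ∧
      Q.support = l₀ ++ u :: x :: u :: (m.reverse ++ v :: y :: v :: d) ∧
      walkWeight ω Q ≤ walkWeight ω P := by
  obtain ⟨A, h₁, h₂, R, rfl, hA, hR⟩ := exists_eq_append_cons_cons_of_support_eq P hP
  obtain ⟨B, h₃, h₄, D, rfl, hB, hD⟩ :=
    exists_eq_append_cons_cons_of_support_eq R (xs := v :: m) (by rw [hR]; rfl)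
  -- The two pairings of `s₁, s₂` with `u, v` together cost exactly the four hop edges.
  obtain ⟨x, y, hux, hvy, hxy, hle⟩ : ∃ (x y : V) (_ : G.Adj u x) (_ : G.Adj v y),
      (x = s₁ ∧ y = s₂ ∨ x = s₂ ∧ y = s₁) ∧
      2 * ω s(u, x) + 2 * ω s(v, y) ≤ ω s(u, s₁) + ω s(s₁, v) + ω s(u, s₂) + ω s(s₂, v) := by
    rw [Sym2.eq_swap (a := s₁), Sym2.eq_swap (a := s₂)]
    rcases le_total (ω s(u, s₁) + ω s(v, s₂)) (ω s(u, s₂) + ω s(v, s₁)) with h | h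
    · exact ⟨s₁, s₂, h₁, h₄.symm, .inl ⟨rfl, rfl⟩, by omega⟩
    · exact ⟨s₂, s₁, h₃, h₂.symm, .inr ⟨rfl, rfl⟩, by omega⟩
  refine ⟨A.append (cons hux (cons hux.symm (B.reverse.append (cons hvy (cons hvy.symm D))))),
    x, y, hxy, by simp [support_append, support_reverse, hA, hB, hD], ?_⟩
  simp only [walkWeight_append, walkWeight_cons, walkWeight_reverse, Sym2.eq_swap (a := x),
    Sym2.eq_swap (a := y)]
  omega

theorem optimal_tour_one_hop_per_pair_general {V : Type*} [DecidableEq V]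
    (G : SimpleGraph V) (ω : Sym2 V → ℕ)
    (C : Set V) [DecidablePred (· ∈ C)]
    (a : V) (P : G.Walk a a) (hPtour : ∀ v : V, v ∈ P.support)
    (hPopt : ∀ (b : V) (Q : G.Walk b b), (∀ v : V, v ∈ Q.support) →
      walkWeight ω P ≤ walkWeight ω Q)
    (hPhops : ∀ (b : V) (Q : G.Walk b b), (∀ v : V, v ∈ Q.support) →
      walkWeight ω Q = walkWeight ω P → numHops C P ≤ numHops C Q) :
    ∀ u v : V, u ∈ C → v ∈ C → u ≠ v →
      ((triples P.support).filter
        (fun t => t.1 = u ∧ t.2.2 = v ∧ t.2.1 ∉ C)).length ≤ 1 := by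
  intro u v hu hv huv
  by_contra! htwo
  obtain ⟨l₀, s₁, m, s₂, d, hs₁, hs₂, hP⟩ :=
    exists_eq_append_of_one_lt_length_filter_hops hu huv htwo
  obtain ⟨Q, x, y, hxy, hQ, hQP⟩ := exists_walk_loops_of_support_eq_two_hops ω P hP
  have hQtour : ∀ w, w ∈ Q.support := by
    intro w
    have hw := hPtour w
    rw [hP] at hw
    rw [hQ]
    rcases hxy with ⟨rfl, rfl⟩ | ⟨rfl, rfl⟩ <;>
      simp only [List.mem_append, List.mem_cons, List.mem_reverse] at hw ⊢ <;> tauto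
  have hhops := hPhops a Q hQtour (le_antisymm hQP (hPopt a Q hQtour))
  rw [numHops_eq_hopCount, numHops_eq_hopCount, hP, hQ,
    ← hopCount_loops_add_two C x y hu hv huv hs₁ hs₂] at hhops
  omega

/-- If `P` is a TSP tour (a closed walk visiting all vertices) of minimum weight,
chosen among minimum-weight tours to have the minimum number of hops, then for every
ordered pair `(u, v)` of distinct vertices of the vertex cover `C`, the tour `P`
contains at most one hop of the form `(u, s, v)` with `s ∉ C`. -/
theorem optimal_tour_one_hop_per_pair {V : Type*} [Fintype V] [DecidableEq V]
    (G : SimpleGraph V) (hconn : G.Connected) (ω : Sym2 V → ℕ)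
    (C : Set V) [DecidablePred (· ∈ C)]
    (hC : ∀ x y : V, G.Adj x y → x ∈ C ∨ y ∈ C)
    (a : V) (P : G.Walk a a) (hPtour : ∀ v : V, v ∈ P.support)
    (hPopt : ∀ (b : V) (Q : G.Walk b b), (∀ v : V, v ∈ Q.support) →
      walkWeight ω P ≤ walkWeight ω Q)
    (hPhops : ∀ (b : V) (Q : G.Walk b b), (∀ v : V, v ∈ Q.support) →
      walkWeight ω Q = walkWeight ω P → numHops C P ≤ numHops C Q) :
    ∀ u v : V, u ∈ C → v ∈ C → u ≠ v →
      ((triples P.support).filter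
        (fun t => t.1 = u ∧ t.2.2 = v ∧ t.2.1 ∉ C)).length ≤ 1 :=
  optimal_tour_one_hop_per_pair_general G ω C a P hPtour hPopt hPhops
end

section
/- Let G be a connected edge-weighted graph, C a vertex cover, and G' the induced subgraph on C ∪ S for some S ⊆ V \ C, where every vertex s ∈ V \ (C ∪ S) has at least one neighbor. If OPT denotes the minimum weight of a TSP tour for G' and OPT' ≤ OPT is attained, then G has a TSP tour of weight OPT' + 2·Σ_{s ∈ V \ (C ∪ S)} ω_min(s), where ω_min(s) = min_{w ∈ N(s)} ω({s,w}). -/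
/-!
Every edge leaving `V \ (C ∪ S)` ends in the vertex cover `C`, which the tour of `G[C ∪ S]`
visits. So each deleted vertex `s` can be picked up by a back-and-forth detour `w → s → w`
along a cheapest edge at `s`, at cost `2 ωmin s`, and inserting these detours one at a time
turns the tour of `G[C ∪ S]` into a tour of `G`.
-/

namespace SimpleGraph.Walk

variable {V : Type*} {G : SimpleGraph V} (ω : Sym2 V → ℕ)

@[simp]
lemma walkWeight_cons {a b c : V} (h : G.Adj a b) (p : G.Walk b c) :
    walkWeight ω (cons h p) = ω s(a, b) + walkWeight ω p := rfl

lemma walkWeight_append {a b c : V} (p : G.Walk a b) (q : G.Walk b c) :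
    walkWeight ω (p.append q) = walkWeight ω p + walkWeight ω q := by
  simp only [walkWeight, edges_append, List.map_append, List.sum_append]

lemma walkWeight_map_induce {s : Set V} {a b : s} (p : (G.induce s).Walk a b) :
    walkWeight ω (p.map (Embedding.induce s).toHom) =
      (p.edges.map fun e => ω (e.map Subtype.val)).sum := by
  simp only [walkWeight, edges_map, List.map_map]
  rfl

variable [DecidableEq V]

lemma exists_detour {a b s w : V} (h : G.Adj s w) (q : G.Walk a b) (hw : w ∈ q.support) :
    ∃ r : G.Walk a b, q.support ⊆ r.support ∧ s ∈ r.support ∧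
      walkWeight ω r = walkWeight ω q + 2 * ω s(s, w) := by
  refine ⟨(q.takeUntil w hw).append (cons h.symm (cons h (q.dropUntil w hw))), ?_, ?_, ?_⟩
  · intro v hv
    rw [← q.take_spec hw, mem_support_append_iff] at hv
    rcases hv with hv | hv <;> simp [mem_support_append_iff, hv]
  · simp [mem_support_append_iff]
  · conv_rhs => rw [← q.take_spec hw]
    simp only [walkWeight_append, walkWeight_cons, Sym2.eq_swap (a := w)]
    ring

lemma exists_walk_with_detours {a b : V} (q : G.Walk a b) (T : Finset V) (f : V → ℕ)
    (hT : ∀ s ∈ T, ∃ w ∈ q.support, G.Adj s w ∧ ω s(s, w) = f s) :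
    ∃ r : G.Walk a b, q.support ⊆ r.support ∧ (∀ s ∈ T, s ∈ r.support) ∧
      walkWeight ω r = walkWeight ω q + 2 * ∑ s ∈ T, f s := by
  induction T using Finset.induction with
  | empty => exact ⟨q, List.Subset.refl _, by simp, by simp⟩
  | @insert s T hs ih =>
    obtain ⟨r, hqr, hTr, hr⟩ := ih fun t ht => hT t (Finset.mem_insert_of_mem ht)
    obtain ⟨w, hwq, hsw, hωw⟩ := hT s (Finset.mem_insert_self s T)
    obtain ⟨r', hrr', hsr', hr'⟩ := exists_detour ω hsw r (hqr hwq)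
    refine ⟨r', List.Subset.trans hqr hrr', ?_, ?_⟩
    · simp only [Finset.mem_insert, forall_eq_or_imp]
      exact ⟨hsr', fun t ht => hrr' (hTr t ht)⟩
    · rw [hr', hr, hωw, Finset.sum_insert hs]
      ring

end SimpleGraph.Walk

open SimpleGraph

theorem lift_tour_general {V : Type*} [Fintype V] [DecidableEq V]
    (G : SimpleGraph V) (ω : Sym2 V → ℕ)
    (C S : Finset V)
    (hC : ∀ u v : V, G.Adj u v → u ∈ C ∨ v ∈ C)
    (ωmin : V → ℕ)
    (hmin : ∀ s : V, s ∉ C → s ∉ S →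
      (∃ w : V, G.Adj s w ∧ ω s(s, w) = ωmin s) ∧
      (∀ w : V, G.Adj s w → ωmin s ≤ ω s(s, w)))
    (OPT' : ℕ)
    (a' : ↑((C ∪ S : Finset V) : Set V))
    (P' : (G.induce ((C ∪ S : Finset V) : Set V)).Walk a' a')
    (hP'tour : ∀ v : ↑((C ∪ S : Finset V) : Set V), v ∈ P'.support)
    (hP'weight : (P'.edges.map (fun e => ω (e.map Subtype.val))).sum = OPT') :
    ∃ (b : V) (P : G.Walk b b), (∀ v : V, v ∈ P.support) ∧
      walkWeight ω P = OPT' + 2 * ∑ s ∈ (C ∪ S)ᶜ, ωmin s := by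
  set P := P'.map (Embedding.induce ((C ∪ S : Finset V) : Set V)).toHom
  have hP : ∀ v ∈ C ∪ S, v ∈ P.support := fun v hv => by
    rw [Walk.support_map, List.mem_map]
    exact ⟨⟨v, hv⟩, hP'tour _, rfl⟩
  have hdetour : ∀ s ∈ (C ∪ S)ᶜ, ∃ w ∈ P.support, G.Adj s w ∧ ω s(s, w) = ωmin s := by
    intro s hs
    simp only [Finset.mem_compl, Finset.mem_union, not_or] at hs
    obtain ⟨w, hsw, hωw⟩ := (hmin s hs.1 hs.2).1
    have hwC : w ∈ C := (hC s w hsw).resolve_left hs.1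
    exact ⟨w, hP w (Finset.mem_union_left S hwC), hsw, hωw⟩
  obtain ⟨Q, hPQ, hQ, hQweight⟩ := Walk.exists_walk_with_detours ω P _ ωmin hdetour
  refine ⟨_, Q, fun v => ?_, by rw [hQweight, Walk.walkWeight_map_induce, hP'weight]⟩
  by_cases hv : v ∈ C ∪ S
  · exact hPQ (hP v hv)
  · exact hQ v (Finset.mem_compl.mpr hv)

/-- Let `C` be a vertex cover of a connected graph `G`, `S ⊆ V \ C`, and
`G' = G[C ∪ S]` the induced subgraph.  Suppose every deleted vertex
`s ∈ V \ (C ∪ S)` has a neighbor, and let `ωmin s` be the minimum weight of an edge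
incident to `s`.  If `G'` has a TSP tour of weight `OPT'`, then `G` has a TSP tour of
weight `OPT' + 2 · Σ_{s ∈ V \ (C ∪ S)} ωmin s`. -/
theorem lift_tour {V : Type*} [Fintype V] [DecidableEq V]
    (G : SimpleGraph V) (hconn : G.Connected) (ω : Sym2 V → ℕ)
    (C S : Finset V)
    (hC : ∀ u v : V, G.Adj u v → u ∈ C ∨ v ∈ C)
    (hSC : ∀ s ∈ S, s ∉ C)
    (ωmin : V → ℕ)
    (hmin : ∀ s : V, s ∉ C → s ∉ S →
      (∃ w : V, G.Adj s w ∧ ω s(s, w) = ωmin s) ∧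
      (∀ w : V, G.Adj s w → ωmin s ≤ ω s(s, w)))
    (OPT' : ℕ)
    (a' : ↑((C ∪ S : Finset V) : Set V))
    (P' : (G.induce ((C ∪ S : Finset V) : Set V)).Walk a' a')
    (hP'tour : ∀ v : ↑((C ∪ S : Finset V) : Set V), v ∈ P'.support)
    (hP'weight : (P'.edges.map (fun e => ω (e.map Subtype.val))).sum = OPT') :
    ∃ (b : V) (P : G.Walk b b), (∀ v : V, v ∈ P.support) ∧
      walkWeight ω P = OPT' + 2 * ∑ s ∈ (C ∪ S)ᶜ, ωmin s :=
  lift_tour_general G ω C S hC ωmin hmin OPT' a' P' hP'tour hP'weight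
end
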